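/- (Claim in the proof of Lemma 4.5.) Let n ≥ 4 and let (V₁, …, V_{2(n−1)}) be a positively convex 2(n−1)-gon in ℂ that is centrally symmetric about 0, i.e. V_{j+n−1} = −V_j for all j (indices mod 2(n−1)). Then for every j and every point P of the level-(n−2) diagonal-gon, the tuple (V_{j+1}, V_{j+2}, …, V_{j+n−1}, P), in this cyclic order, is a positively convex n-gon. -/
import Mathlib

noncomputable section

/-- The (strict) total order on `ℂ`: compare imaginary parts first, then real parts. -/
def cLt (a b : ℂ) : Prop := a.im < b.im ∨ (a.im = b.im ∧ a.re < b.re)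

/-- The corresponding non-strict order on `ℂ`. -/
def cLe (a b : ℂ) : Prop := cLt a b ∨ a = b

/-- `cross u v = Im (conj u * v)`. -/
def cross (u v : ℂ) : ℝ := ((starRingEnd ℂ) u * v).im

/-- A positively convex `h`-gon: every other vertex lies strictly to the left of each
directed edge from `V (j-1)` to `V j`. -/
def PosConvex {h : ℕ} (V : ZMod h → ℂ) : Prop :=
  ∀ j i : ZMod h, i ≠ j - 1 → i ≠ j →
    0 < cross (V j - V (j - 1)) (V i - V (j - 1))

/-- The (open) level-`s` diagonal-gon of an `h`-gon. -/
def DiagGon {h : ℕ} (V : ZMod h → ℂ) (s : ℕ) : Set ℂ :=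
  {P : ℂ | ∀ j : ZMod h, 0 < cross (V (j + (s : ZMod h)) - V j) (P - V j)}

/-- Edge vectors of an `h`-gon. -/
def zEdge {h : ℕ} (V : ZMod h → ℂ) (j : ZMod h) : ℂ := V j - V (j - 1)

/-- Central symmetry about `0` for a `2(n-1)`-gon. -/
def DSym (n : ℕ) (V : ZMod (2 * (n - 1)) → ℂ) : Prop :=
  ∀ j : ZMod (2 * (n - 1)), V (j + ((n - 1 : ℕ) : ZMod (2 * (n - 1)))) = -V j

/-- A stable `2(n-1)`-gon of type `D_n`, with punctures `B₊ = B` and `B₋ = -B`. -/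
def IsStableDGon (n : ℕ) (V : ZMod (2 * (n - 1)) → ℂ) (B : ℂ) : Prop :=
  PosConvex V ∧ DSym n V ∧ cLe (-B) B ∧
    (-B) ∈ DiagGon V (n - 2) ∧ B ∈ DiagGon V (n - 2)

/-- The `2n` marked points of a type `D_n` gon: the vertices together with the two punctures. -/
def DPoints (n : ℕ) (V : ZMod (2 * (n - 1)) → ℂ) (B : ℂ) :
    ZMod (2 * (n - 1)) ⊕ Fin 2 → ℂ :=
  Sum.elim V (fun b => if b = 0 then B else -B)

/-- `Y 0, Y 1, …, Y (2n-1)` is an increasing enumeration (via the bijection `e`) of the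
`2n` marked points; `Y i` corresponds to the point `Y_{i-n}` (for `0 ≤ i ≤ n-1`) resp.
`Y_{i-n+1}` (for `n ≤ i ≤ 2n-1`) of the paper. -/
def DEnum (n : ℕ) (V : ZMod (2 * (n - 1)) → ℂ) (B : ℂ) (Y : ℕ → ℂ)
    (e : Fin (2 * n) ≃ (ZMod (2 * (n - 1)) ⊕ Fin 2)) : Prop :=
  (∀ m : Fin (2 * n), Y (m : ℕ) = DPoints n V B (e m)) ∧
  (∀ i j : ℕ, i < j → j < 2 * n → cLe (Y i) (Y j))

/-! ### Auxiliary lemmas -/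

lemma crossDef (u v : ℂ) : cross u v = u.re * v.im - u.im * v.re := by
  simp [cross, Complex.mul_im]; ring

lemma crossCycle (A B C : ℂ) : cross (B - A) (C - A) = cross (C - B) (A - B) := by
  simp [crossDef]; ring

lemma crossSubRight (u w : ℂ) : cross u (w - u) = cross u w := by
  simp [crossDef]; ring

lemma crossNegNeg (u v : ℂ) : cross (-u) (-v) = cross u v := by
  simp [crossDef]

lemma crossSelf (u : ℂ) : cross u u = 0 := by simp [crossDef]; ring

lemma crossSwap (u v : ℂ) : cross u v = -cross v u := by simp [crossDef]; ring

lemma axiom5 {S Pv Q R : ℂ} (h1 : 0 ≤ cross S Pv) (h2 : 0 < cross S Q)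
    (h3 : 0 < cross S R) (h4 : 0 < cross Pv Q) (h5 : 0 < cross Q R) :
    0 < cross Pv R := by
  have key : cross S Q * cross Pv R = cross S Pv * cross Q R + cross S R * cross Pv Q := by
    simp [crossDef]; ring
  nlinarith [mul_nonneg h1 h5.le, mul_pos h3 h4]

lemma wedge {u1 u2 e p : ℂ} (h0 : 0 < cross u1 u2) (h1 : 0 < cross u1 p)
    (h2 : 0 < cross u2 p) (h3 : 0 < cross u1 e) (h4 : cross u2 e < 0) :
    0 < cross e p := by
  have key : cross u1 u2 * cross e p = cross u1 e * cross u2 p - cross u1 p * cross u2 e := by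
    simp [crossDef]; ring
  nlinarith [mul_pos h3 h2, mul_pos h1 (neg_pos.2 h4)]

lemma castNe {h k m : ℕ} (hk : k < h) (hm : m < h) (hne : k ≠ m) :
    (k : ZMod h) ≠ (m : ZMod h) := by
  haveI : NeZero h := ⟨by omega⟩
  intro he
  have := congrArg ZMod.val he
  rw [ZMod.val_cast_of_lt hk, ZMod.val_cast_of_lt hm] at this
  exact hne this

lemma addCastNe {h : ℕ} (a : ZMod h) {k m : ℕ} (hk : k < h) (hm : m < h) (hne : k ≠ m) :
    a + (k : ZMod h) ≠ a + (m : ZMod h) := by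
  intro he
  exact castNe hk hm hne (by linear_combination he)

lemma neAddCast {h : ℕ} (a : ZMod h) {k : ℕ} (h1 : 0 < k) (h2 : k < h) :
    a ≠ a + (k : ZMod h) := by
  intro he
  exact castNe (h := h) (k := 0) (m := k) (by omega) h2 (by omega)
    (by push_cast; linear_combination he)

/-- The triple lemma: any positively ordered triple of vertices of a positively convex
polygon is positively oriented. -/
lemma tripleT {h : ℕ} {V : ZMod h → ℂ} (hpc : PosConvex V) (a : ZMod h)
    (k m : ℕ) (hk : 1 ≤ k) (hkm : k < m) (hm : m < h) :
    0 < cross (V (a + (k : ZMod h)) - V a) (V (a + (m : ZMod h)) - V a) := by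
  have hh : 3 ≤ h := by omega
  have edge : ∀ t : ℕ, 1 ≤ t → t + 1 < h →
      0 < cross (V (a + (t : ZMod h)) - V a) (V (a + ((t+1 : ℕ) : ZMod h)) - V a) := by
    intro t ht ht1
    have h0 := hpc (a + ((t+1 : ℕ) : ZMod h)) a
      (by rw [show a + ((t+1:ℕ) : ZMod h) - 1 = a + (t : ZMod h) by push_cast; ring]
          exact neAddCast a (by omega) (by omega))
      (neAddCast a (by omega) (by omega))
    rw [show a + ((t+1:ℕ) : ZMod h) - 1 = a + (t : ZMod h) by push_cast; ring] at h0
    rw [crossCycle]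
    exact h0
  have fan : ∀ t : ℕ, 2 ≤ t → t < h →
      0 < cross (V (a + ((1:ℕ) : ZMod h)) - V a) (V (a + (t : ZMod h)) - V a) := by
    intro t ht ht1
    have h0 := hpc (a + ((1:ℕ) : ZMod h)) (a + (t : ZMod h))
      (by rw [show a + ((1:ℕ) : ZMod h) - 1 = a + ((0:ℕ) : ZMod h) by push_cast; ring]
          exact addCastNe a ht1 (by omega) (by omega))
      (addCastNe a ht1 (by omega) (by omega))
    rwa [show a + ((1:ℕ) : ZMod h) - 1 = a by push_cast; ring] at h0
  clear hh
  induction m, hkm using Nat.le_induction with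
  | base => exact edge k hk (by omega)
  | succ m hkm ih =>
    have hmh : m < h := by omega
    have hSP : 0 ≤ cross (V (a + ((1:ℕ) : ZMod h)) - V a) (V (a + (k : ZMod h)) - V a) := by
      rcases Nat.eq_or_lt_of_le hk with hk1 | hk2
      · rw [← hk1, crossSelf]
      · exact (fan k (by omega) (by omega)).le
    have hSQ := fan m (by omega) hmh
    have hSR := fan (m+1) (by omega) (by omega)
    have hPQ := ih hmh
    have hQR := edge m (by omega) (by omega)
    exact axiom5 hSP hSQ hSR hPQ hQR

/-- Any point of the level-`(n-2)` diagonal-gon lies strictly to the left of every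
diagonal of level `s`, `1 ≤ s ≤ n-2`. -/
lemma diagLeft {n : ℕ} (hn : 4 ≤ n) {V : ZMod (2*(n-1)) → ℂ} (hpc : PosConvex V)
    {P : ℂ} (hP : P ∈ DiagGon V (n-2)) (x : ZMod (2*(n-1))) (s : ℕ)
    (hs1 : 1 ≤ s) (hs2 : s ≤ n-2) :
    0 < cross (V (x + ((s : ℕ) : ZMod (2*(n-1)))) - V x) (P - V x) := by
  have hP' : ∀ j : ZMod (2*(n-1)),
      0 < cross (V (j + ((n-2 : ℕ) : ZMod (2*(n-1)))) - V j) (P - V j) := hP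
  set c : ZMod (2*(n-1)) := ((n-2 : ℕ) : ZMod (2*(n-1))) with hc
  set x₀ : ZMod (2*(n-1)) := x - c with hx0
  have hx : x₀ + c = x := by rw [hx0]; ring
  -- h1 : P strictly left of the diagonal ending at x
  have h1 : 0 < cross (V x - V x₀) (P - V x) := by
    have h1' := hP' x₀
    rw [hx] at h1'
    rw [show P - V x = (P - V x₀) - (V x - V x₀) by ring, crossSubRight]
    exact h1'
  -- h2 : P strictly left of the diagonal starting at x
  have h2 : 0 < cross (V (x + c) - V x) (P - V x) := hP' x
  -- casts
  have hcast2 : ((2*(n-2) : ℕ) : ZMod (2*(n-1))) = c + c := by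
    rw [hc, show 2*(n-2) = (n-2) + (n-2) by ring, Nat.cast_add]
  have hxx : x₀ + ((2*(n-2) : ℕ) : ZMod (2*(n-1))) = x + c := by
    rw [hcast2, ← hx]; ring
  have h3 : 0 < cross (V x - V x₀) (V (x + c) - V x) := by
    have t3 := tripleT hpc x₀ (n-2) (2*(n-2)) (by omega) (by omega) (by omega)
    rw [← hc, hx, hxx] at t3
    rw [show V (x + c) - V x = (V (x + c) - V x₀) - (V x - V x₀) by ring, crossSubRight]
    exact t3
  have h4 : 0 < cross (V x - V x₀) (V (x + ((s : ℕ) : ZMod (2*(n-1)))) - V x) := by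
    have hxs : x₀ + ((n-2+s : ℕ) : ZMod (2*(n-1))) = x + ((s:ℕ) : ZMod (2*(n-1))) := by
      rw [← hx, hc, Nat.cast_add]; ring
    have t4 := tripleT hpc x₀ (n-2) (n-2+s) (by omega) (by omega) (by omega)
    rw [← hc, hx, hxs] at t4
    rw [show V (x + ((s:ℕ) : ZMod (2*(n-1)))) - V x
        = (V (x + ((s:ℕ) : ZMod (2*(n-1)))) - V x₀) - (V x - V x₀) by ring, crossSubRight]
    exact t4
  rcases Nat.eq_or_lt_of_le hs2 with hseq | hslt
  · rw [show ((s : ℕ) : ZMod (2*(n-1))) = c by rw [hc, hseq]]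
    exact h2
  · have t5 := tripleT hpc x s (n-2) hs1 hslt (by omega)
    rw [← hc] at t5
    have h5 : cross (V (x + c) - V x) (V (x + ((s:ℕ) : ZMod (2*(n-1)))) - V x) < 0 := by
      rw [crossSwap]; linarith
    exact wedge h3 h1 h2 h4 h5

/-- The diagonal-gon of a centrally symmetric polygon is symmetric about the origin. -/
lemma negMem {n : ℕ} {V : ZMod (2*(n-1)) → ℂ} (hsym : DSym n V)
    {P : ℂ} (hP : P ∈ DiagGon V (n-2)) : -P ∈ DiagGon V (n-2) := by
  intro j
  have h0 := hP (j + ((n-1 : ℕ) : ZMod (2*(n-1))))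
  rw [show j + ((n-1:ℕ) : ZMod (2*(n-1))) + ((n-2:ℕ) : ZMod (2*(n-1)))
      = (j + ((n-2:ℕ) : ZMod (2*(n-1)))) + ((n-1:ℕ) : ZMod (2*(n-1))) by ring,
    hsym (j + ((n-2:ℕ) : ZMod (2*(n-1)))), hsym j] at h0
  have e1 : (-(V (j + ((n-2:ℕ) : ZMod (2*(n-1))))) - -(V j))
      = -(V (j + ((n-2:ℕ) : ZMod (2*(n-1)))) - V j) := by ring
  have e2 : (P - -(V j)) = -(-P - V j) := by ring
  rw [e1, e2, crossNegNeg] at h0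
  exact h0

set_option maxHeartbeats 1000000 in
/-- (Claim in the proof of Lemma 4.5.) For a centrally symmetric positively convex
`2(n-1)`-gon and any point `P` of the level-`(n-2)` diagonal-gon, the tuple
`(V (j+1), V (j+2), …, V (j+n-1), P)`, in this cyclic order, is a positively convex
`n`-gon. -/
theorem consecutive_with_inner_point_posConvex (n : ℕ) (hn : 4 ≤ n)
    (V : ZMod (2 * (n - 1)) → ℂ) (hpc : PosConvex V) (hsym : DSym n V)
    (j : ZMod (2 * (n - 1))) (P : ℂ) (hP : P ∈ DiagGon V (n - 2)) :
    PosConvex (fun i : ZMod n =>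
      if (ZMod.val i) = n - 1 then P
      else V (j + ((ZMod.val i + 1 : ℕ) : ZMod (2 * (n - 1))))) := by
  haveI hNn : NeZero n := ⟨by omega⟩
  intro jj ii hne1 hne2
  dsimp only
  have ha : jj.val < n := ZMod.val_lt jj
  have hb : ii.val < n := ZMod.val_lt ii
  have hsub : (jj - 1).val = (jj.val + (n-1)) % n := by
    have hm1 : ((n-1 : ℕ) : ZMod n) = -1 := by
      have h0 : (((n-1) + 1 : ℕ) : ZMod n) = 0 := by
        rw [show n-1+1 = n by omega]; exact ZMod.natCast_self n
      push_cast at h0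
      linear_combination h0
    rw [show jj - 1 = jj + ((n-1:ℕ) : ZMod n) by rw [hm1]; ring,
      ZMod.val_add, ZMod.val_cast_of_lt (show n-1 < n by omega)]
  have hba : ii.val ≠ jj.val := fun he => hne2 (ZMod.val_injective n he)
  have hbs : ii.val ≠ (jj.val + (n-1)) % n := by
    intro he
    exact hne1 (ZMod.val_injective n (by rw [hsub]; exact he))
  by_cases ha0 : jj.val = 0
  · -- Case A : the edge goes from P to V (j+1)
    have hmod : (jj.val + (n-1)) % n = n - 1 := by
      rw [ha0, Nat.zero_add, Nat.mod_eq_of_lt (by omega)]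
    have hs' : (jj - 1).val = n - 1 := hsub.trans hmod
    have hbn1 : ii.val ≠ n - 1 := fun he => hbs (he.trans hmod.symm)
    rw [hs', if_pos (rfl : n - 1 = n - 1), ha0, if_neg (by omega), if_neg hbn1]
    rw [crossCycle]
    have hxb : j + ((ii.val + 1 : ℕ) : ZMod (2*(n-1)))
        = (j + ((0 + 1 : ℕ) : ZMod (2*(n-1)))) + ((ii.val : ℕ) : ZMod (2*(n-1))) := by
      push_cast; ring
    rw [hxb]
    exact diagLeft hn hpc hP _ ii.val (by omega) (by omega)
  · by_cases han : jj.val = n - 1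
    · -- Case B : the edge goes from V (j+n-1) to P
      have hmod : (jj.val + (n-1)) % n = n - 2 := by
        rw [han, show (n-1) + (n-1) = n + (n-2) by omega, Nat.add_mod_left,
          Nat.mod_eq_of_lt (by omega)]
      have hs' : (jj - 1).val = n - 2 := hsub.trans hmod
      have hbn2 : ii.val ≠ n - 2 := fun he => hbs (he.trans hmod.symm)
      rw [if_pos han, hs', if_neg (by omega), if_neg (by omega),
        show n - 2 + 1 = n - 1 by omega]
      rw [hsym j]
      have hq : V (j + ((ii.val + 1 : ℕ) : ZMod (2*(n-1))))
          = -V (j + ((ii.val + 1 : ℕ) : ZMod (2*(n-1))) + ((n-1:ℕ) : ZMod (2*(n-1)))) := by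
        linear_combination hsym (j + ((ii.val + 1 : ℕ) : ZMod (2*(n-1))))
      rw [hq]
      set x : ZMod (2*(n-1)) :=
        j + ((ii.val + 1 : ℕ) : ZMod (2*(n-1))) + ((n-1:ℕ) : ZMod (2*(n-1))) with hxdef
      have e1 : P - -(V j) = -(-P - V j) := by ring
      have e2 : -(V x) - -(V j) = -(V x - V j) := by ring
      rw [e1, e2, crossNegNeg, crossCycle, crossCycle]
      have hxs : x + ((n - ii.val - 2 : ℕ) : ZMod (2*(n-1))) = j := by
        have hsum : ((ii.val + 1) + (n-1) + (n - ii.val - 2) : ℕ) = 2*(n-1) := by omega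
        calc x + ((n - ii.val - 2 : ℕ) : ZMod (2*(n-1)))
            = j + (((ii.val + 1) + (n-1) + (n - ii.val - 2) : ℕ) : ZMod (2*(n-1))) := by
              rw [hxdef]; push_cast; ring
          _ = j := by rw [hsum, ZMod.natCast_self, add_zero]
      have final := diagLeft hn hpc (negMem hsym hP) x (n - ii.val - 2)
        (by omega) (by omega)
      rw [hxs] at final
      exact final
    · -- Case C : the edge is an ordinary edge V (j+a) → V (j+a+1)
      have hmod : (jj.val + (n-1)) % n = jj.val - 1 := by
        rw [show jj.val + (n-1) = n + (jj.val - 1) by omega, Nat.add_mod_left,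
          Nat.mod_eq_of_lt (by omega)]
      have hs' : (jj - 1).val = jj.val - 1 := hsub.trans hmod
      have hbs' : ii.val ≠ jj.val - 1 := fun he => hbs (he.trans hmod.symm)
      rw [if_neg han, hs', if_neg (by omega), show jj.val - 1 + 1 = jj.val by omega]
      by_cases hbn : ii.val = n - 1
      · -- the other point is P
        rw [if_pos hbn]
        have e1 : j + ((jj.val + 1 : ℕ) : ZMod (2*(n-1)))
            = (j + ((jj.val : ℕ) : ZMod (2*(n-1)))) + ((1:ℕ) : ZMod (2*(n-1))) := by
          push_cast; ring
        rw [e1]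
        exact diagLeft hn hpc hP _ 1 le_rfl (by omega)
      · rw [if_neg hbn]
        rcases lt_or_gt_of_ne hba with hlt | hgt
        · -- ii.val < jj.val, in fact ii.val ≤ jj.val - 2
          rw [crossCycle, crossCycle]
          have ec1 : ((jj.val : ℕ) : ZMod (2*(n-1)))
              = ((ii.val + 1 : ℕ) : ZMod (2*(n-1))) + ((jj.val - ii.val - 1 : ℕ) : ZMod (2*(n-1))) := by
            rw [← Nat.cast_add, show (ii.val + 1) + (jj.val - ii.val - 1) = jj.val by omega]
          have ec2 : ((jj.val + 1 : ℕ) : ZMod (2*(n-1)))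
              = ((ii.val + 1 : ℕ) : ZMod (2*(n-1))) + ((jj.val - ii.val : ℕ) : ZMod (2*(n-1))) := by
            rw [← Nat.cast_add, show (ii.val + 1) + (jj.val - ii.val) = jj.val + 1 by omega]
          rw [show j + ((jj.val : ℕ) : ZMod (2*(n-1)))
              = (j + ((ii.val + 1 : ℕ) : ZMod (2*(n-1)))) + ((jj.val - ii.val - 1 : ℕ) : ZMod (2*(n-1))) by
                rw [ec1]; ring,
            show j + ((jj.val + 1 : ℕ) : ZMod (2*(n-1)))
              = (j + ((ii.val + 1 : ℕ) : ZMod (2*(n-1)))) + ((jj.val - ii.val : ℕ) : ZMod (2*(n-1))) by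
                rw [ec2]; ring]
          exact tripleT hpc _ (jj.val - ii.val - 1) (jj.val - ii.val)
            (by omega) (by omega) (by omega)
        · -- jj.val < ii.val
          have ec1 : ((jj.val + 1 : ℕ) : ZMod (2*(n-1)))
              = ((jj.val : ℕ) : ZMod (2*(n-1))) + ((1 : ℕ) : ZMod (2*(n-1))) := by
            push_cast; ring
          have ec2 : ((ii.val + 1 : ℕ) : ZMod (2*(n-1)))
              = ((jj.val : ℕ) : ZMod (2*(n-1))) + ((ii.val + 1 - jj.val : ℕ) : ZMod (2*(n-1))) := by
            rw [← Nat.cast_add, show jj.val + (ii.val + 1 - jj.val) = ii.val + 1 by omega]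
          rw [show j + ((jj.val + 1 : ℕ) : ZMod (2*(n-1)))
              = (j + ((jj.val : ℕ) : ZMod (2*(n-1)))) + ((1:ℕ) : ZMod (2*(n-1))) by rw [ec1]; ring,
            show j + ((ii.val + 1 : ℕ) : ZMod (2*(n-1)))
              = (j + ((jj.val : ℕ) : ZMod (2*(n-1)))) + ((ii.val + 1 - jj.val : ℕ) : ZMod (2*(n-1))) by
                rw [ec2]; ring]
          exact tripleT hpc _ 1 (ii.val + 1 - jj.val) le_rfl (by omega) (by omega)
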